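/- arXiv:1905.08862 — 2 statements merged into one kernel-verified Lean document; each statement's English description precedes it below -/
import Mathlib

section
/- For every integer n ≥ 2, 1 − 2/n ≤ Γ(1 + 2/(n−1)) ≤ 1 + 2/n. -/
open Real Set

lemma gamma_ge_one_of_two_le (s : ℝ) (hs : 2 ≤ s) : 1 ≤ Real.Gamma s := by
  rcases eq_or_lt_of_le hs with h | h
  · rw [← h, Real.Gamma_two]
  · have hs1 : (0:ℝ) < s - 1 := by linarith
    have key := Real.convexOn_Gamma.2 (show (1:ℝ) ∈ Ioi 0 by norm_num)
      (show s ∈ Ioi 0 from mem_Ioi.mpr (by linarith))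
      (show (0:ℝ) ≤ (s-2)/(s-1) from div_nonneg (by linarith) (by linarith))
      (show (0:ℝ) ≤ 1/(s-1) by positivity)
      (by field_simp; ring)
    have hcomb : ((s-2)/(s-1)) * (1:ℝ) + (1/(s-1)) * s = 2 := by
      field_simp; ring
    simp only [smul_eq_mul] at key
    rw [hcomb, Real.Gamma_two, Real.Gamma_one] at key
    have h1 : 1 - (s-2)/(s-1) = 1/(s-1) := by field_simp; ring
    nlinarith [key, one_div_pos.mpr hs1]

lemma gamma_le_one (x : ℝ) (hx0 : 0 ≤ x) (hx1 : x ≤ 1) : Real.Gamma (1 + x) ≤ 1 := by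
  have key := Real.convexOn_Gamma.2 (show (1:ℝ) ∈ Ioi 0 by norm_num)
    (show (2:ℝ) ∈ Ioi 0 by norm_num)
    (show (0:ℝ) ≤ 1 - x by linarith) hx0 (by ring)
  simp only [smul_eq_mul] at key
  have hcomb : (1-x) * (1:ℝ) + x * (2:ℝ) = 1 + x := by ring
  rw [hcomb, Real.Gamma_two, Real.Gamma_one] at key
  linarith

/-- For every integer `n ≥ 2`, `1 - 2/n ≤ Γ(1 + 2/(n-1)) ≤ 1 + 2/n`. -/
theorem stmt15 (n : ℕ) (hn : 2 ≤ n) :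
    1 - 2 / (n : ℝ) ≤ Real.Gamma (1 + 2 / ((n : ℝ) - 1))
    ∧ Real.Gamma (1 + 2 / ((n : ℝ) - 1)) ≤ 1 + 2 / (n : ℝ) := by
  have hn2 : (2:ℝ) ≤ n := by exact_mod_cast hn
  have hn1 : (0:ℝ) < (n:ℝ) - 1 := by linarith
  have hnpos : (0:ℝ) < (n:ℝ) := by linarith
  set x : ℝ := 2 / ((n:ℝ) - 1) with hxdef
  have hx0 : 0 < x := by positivity
  constructor
  · -- lower bound
    have h2 : Real.Gamma (2 + x) = (1 + x) * Real.Gamma (1 + x) := by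
      have := Real.Gamma_add_one (s := 1 + x) (by positivity)
      rw [show (1:ℝ) + x + 1 = 2 + x by ring] at this
      exact this
    have h3 : 1 ≤ (1 + x) * Real.Gamma (1 + x) := by
      rw [← h2]; exact gamma_ge_one_of_two_le _ (by linarith)
    have h4 : 1 / (1 + x) ≤ Real.Gamma (1 + x) := by
      rw [div_le_iff₀ (by positivity)]
      nlinarith
    refine le_trans ?_ h4
    have h5 : 1 / (1 + x) = ((n:ℝ) - 1) / ((n:ℝ) + 1) := by
      have hx : 1 + x = ((n:ℝ) + 1) / ((n:ℝ) - 1) := by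
        rw [hxdef]; field_simp; ring
      rw [hx, one_div_div]
    rw [h5, le_div_iff₀ (by linarith)]
    have h6 : 2 / (n:ℝ) * n = 2 := by field_simp
    nlinarith [h6, hnpos]
  · -- upper bound
    rcases eq_or_lt_of_le hn with h | h
    · have hne : (n:ℝ) = 2 := by rw [← h]; norm_num
      have h3 : Real.Gamma 3 = 2 := by
        rw [show (3:ℝ) = ((2:ℕ):ℝ) + 1 by norm_num, Real.Gamma_nat_eq_factorial]
        norm_num
      rw [hxdef, hne]
      norm_num [h3]
    · have hn3 : (3:ℝ) ≤ n := by exact_mod_cast h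
      have hx1 : x ≤ 1 := by
        rw [hxdef, div_le_one hn1]; linarith
      have hle := gamma_le_one x (le_of_lt hx0) hx1
      have hp : 0 < 2 / (n:ℝ) := by positivity
      linarith
end

section
/- For all integers n ≥ 2 and 1 ≤ j ≤ n, 1 ≤ Γ(j + 1 + 2/(n−1)) / Γ(j+1) ≤ 1 + 25·ln(j+1)/n. Moreover, for all integers n ≥ 10, Γ(n + 1 + 2/(n−1)) / Γ(n+1) ≤ 1 + 4·ln(n)/n. -/
/-!
Log-convexity of `Γ` gives `Γ(x + s) ≤ Γ(x) x^s` for `0 ≤ s ≤ 1`, and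
`x^s = exp (s log x) ≤ 1 + s log x · x^s`. With `s = 2/(n-1)` and `x = j + 1 ≤ n + 1`, the
factor `x^s` is at most an absolute constant `B` as soon as `(n+1)² ≤ B^(n-1)`: `B = 4` works for
`n ≥ 3`, and `B = 1.71` for `n ≥ 10`. For `n = 2` the shift is `s = 2`, and the ratio is
`x (x + 1)` exactly. The lower bound is monotonicity of `Γ` on `[2, ∞)`.
-/

open Real

namespace Real

theorem exp_le_one_add_mul_exp (t : ℝ) : exp t ≤ 1 + t * exp t := by
  have h := mul_le_mul_of_nonneg_right (add_one_le_exp (-t)) (exp_pos t).le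
  rw [← exp_add, neg_add_cancel, exp_zero] at h
  linarith

theorem rpow_le_one_add_mul_log_mul_rpow {x : ℝ} (hx : 0 < x) (s : ℝ) :
    x ^ s ≤ 1 + s * log x * x ^ s := by
  rw [rpow_def_of_pos hx, mul_comm s]
  exact exp_le_one_add_mul_exp _

theorem rpow_two_div_le_of_sq_le_pow {x B : ℝ} {m : ℕ} (hx : 0 ≤ x) (hB : 0 ≤ B)
    (hm : m ≠ 0) (h : x ^ 2 ≤ B ^ m) : x ^ (2 / (m : ℝ)) ≤ B := by
  rwa [← pow_le_pow_iff_left₀ (rpow_nonneg hx _) hB hm, ← rpow_mul_natCast hx,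
    div_mul_cancel₀ _ (Nat.cast_ne_zero.2 hm), rpow_ofNat]

theorem Gamma_add_le_mul_rpow {x s : ℝ} (hx : 0 < x) (hs0 : 0 ≤ s) (hs1 : s ≤ 1) :
    Gamma (x + s) ≤ Gamma x * x ^ s := by
  have hG := Gamma_pos_of_pos hx
  have hconv := convexOn_log_Gamma.2 (Set.mem_Ioi.2 hx)
    (Set.mem_Ioi.2 (by linarith : 0 < x + 1)) (sub_nonneg.2 hs1) hs0 (sub_add_cancel 1 s)
  simp only [smul_eq_mul, Function.comp_apply, Gamma_add_one hx.ne',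
    log_mul hx.ne' hG.ne'] at hconv
  rw [show (1 - s) * x + s * (x + 1) = x + s by ring] at hconv
  calc Gamma (x + s) = exp (log (Gamma (x + s))) :=
        (exp_log (Gamma_pos_of_pos (by linarith))).symm
    _ ≤ exp (log (Gamma x) + log x * s) := exp_le_exp.2 (by linarith)
    _ = Gamma x * x ^ s := by rw [exp_add, exp_log hG, rpow_def_of_pos hx]

theorem Gamma_add_div_Gamma_le {x s B : ℝ} (hx : 1 ≤ x) (hs0 : 0 ≤ s) (hs1 : s ≤ 1)
    (hB : x ^ s ≤ B) : Gamma (x + s) / Gamma x ≤ 1 + s * log x * B := by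
  have hx0 : 0 < x := by linarith
  have hlog : 0 ≤ s * log x := mul_nonneg hs0 (log_nonneg hx)
  rw [div_le_iff₀' (Gamma_pos_of_pos hx0)]
  calc Gamma (x + s) ≤ Gamma x * x ^ s := Gamma_add_le_mul_rpow hx0 hs0 hs1
    _ ≤ Gamma x * (1 + s * log x * B) := by
      gcongr
      nlinarith [rpow_le_one_add_mul_log_mul_rpow hx0 s]

theorem Gamma_add_two_div_div_Gamma_le {x B : ℝ} {m : ℕ} (hm : 2 ≤ m) (hx : 1 ≤ x)
    (hB0 : 0 ≤ B) (hB : x ^ 2 ≤ B ^ m) :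
    Gamma (x + 2 / m) / Gamma x ≤ 1 + 2 * B * log x / m := by
  have hm' : (2 : ℝ) ≤ m := by exact_mod_cast hm
  have h := Gamma_add_div_Gamma_le hx (by positivity) ((div_le_one (by linarith)).2 hm')
    (rpow_two_div_le_of_sq_le_pow (by linarith) hB0 (by omega) hB)
  rwa [div_mul_eq_mul_div, div_mul_eq_mul_div, mul_right_comm 2 (log x) B] at h

theorem Gamma_add_two {x : ℝ} (hx : 0 < x) : Gamma (x + 2) = x * (x + 1) * Gamma x := by
  rw [show x + 2 = x + 1 + 1 by ring, Gamma_add_one (by linarith), Gamma_add_one hx.ne']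
  ring

theorem one_le_Gamma_add_div_Gamma {x s : ℝ} (hx : 2 ≤ x) (hs : 0 ≤ s) :
    1 ≤ Gamma (x + s) / Gamma x := by
  rw [one_le_div (Gamma_pos_of_pos (by linarith))]
  exact Gamma_strictMonoOn_Ici.monotoneOn hx (by simp; linarith) (by linarith)

theorem log_add_one_le_log_add_inv {y : ℝ} (hy : 0 < y) : log (y + 1) ≤ log y + y⁻¹ := by
  have h := log_le_sub_one_of_pos (show 0 < (y + 1) / y by positivity)
  rw [log_div (by positivity) hy.ne', add_div, div_self hy.ne', one_div] at h
  linarith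

end Real

theorem sq_add_two_le_pow {B : ℝ} {a : ℕ} (hbase : ((a : ℝ) + 2) ^ 2 ≤ B ^ a)
    (hstep : ((a : ℝ) + 3) ^ 2 ≤ B * ((a : ℝ) + 2) ^ 2) {m : ℕ} (hm : a ≤ m) :
    ((m : ℝ) + 2) ^ 2 ≤ B ^ m := by
  induction m, hm using Nat.le_induction with
  | base => exact hbase
  | succ m hm ih =>
    have ha : (a : ℝ) ≤ m := by exact_mod_cast hm
    have hB : 0 ≤ B := by nlinarith
    -- `(m + 3) / (m + 2)` decreases in `m`, so the step at `a` controls every later step.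
    have hratio : ((m : ℝ) + 3) * (a + 2) ≤ (a + 3) * (m + 2) := by linarith
    have hstep' : ((m : ℝ) + 3) ^ 2 ≤ B * (m + 2) ^ 2 := by
      refine le_of_mul_le_mul_right ?_ (by positivity : (0 : ℝ) < ((a : ℝ) + 2) ^ 2)
      calc ((m : ℝ) + 3) ^ 2 * (a + 2) ^ 2 = (((m : ℝ) + 3) * (a + 2)) ^ 2 := by ring
        _ ≤ (((a : ℝ) + 3) * (m + 2)) ^ 2 := pow_le_pow_left₀ (by positivity) hratio 2
        _ = ((a : ℝ) + 3) ^ 2 * (m + 2) ^ 2 := by ring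
        _ ≤ B * ((a : ℝ) + 2) ^ 2 * (m + 2) ^ 2 := by gcongr
        _ = B * ((m : ℝ) + 2) ^ 2 * (a + 2) ^ 2 := by ring
    push_cast
    calc ((m : ℝ) + 1 + 2) ^ 2 = ((m : ℝ) + 3) ^ 2 := by ring
      _ ≤ B * ((m : ℝ) + 2) ^ 2 := hstep'
      _ ≤ B ^ (m + 1) := (mul_le_mul_of_nonneg_left ih hB).trans_eq (pow_succ' B m).symm

theorem Gamma_add_two_div_div_Gamma_le_of_two_le {j m : ℕ} (hm : 2 ≤ m) (hj : j ≤ m + 1) :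
    Gamma ((j : ℝ) + 1 + 2 / m) / Gamma ((j : ℝ) + 1) ≤
      1 + 25 * log ((j : ℝ) + 1) / (m + 1) := by
  have hm' : (2 : ℝ) ≤ m := by exact_mod_cast hm
  have hj' : (j : ℝ) ≤ m + 1 := by exact_mod_cast hj
  have hsq : ((j : ℝ) + 1) ^ 2 ≤ 4 ^ m :=
    calc ((j : ℝ) + 1) ^ 2 ≤ ((m : ℝ) + 2) ^ 2 :=
          pow_le_pow_left₀ (by positivity) (by linarith) 2
      _ ≤ 4 ^ m := sq_add_two_le_pow (a := 2) (by norm_num) (by norm_num) hm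
  have hlog : 0 ≤ log ((j : ℝ) + 1) := log_nonneg (by linarith)
  refine (Gamma_add_two_div_div_Gamma_le hm (by linarith) (by norm_num) hsq).trans ?_
  rw [add_le_add_iff_left, div_le_div_iff₀ (by linarith) (by linarith)]
  nlinarith

theorem Gamma_add_two_div_Gamma_le_of_le_two {j : ℕ} (hj1 : 1 ≤ j) (hj2 : j ≤ 2) :
    Gamma ((j : ℝ) + 1 + 2) / Gamma ((j : ℝ) + 1) ≤ 1 + 25 * log ((j : ℝ) + 1) / 2 := by
  rw [Gamma_add_two (by positivity),
    mul_div_cancel_right₀ _ (Gamma_pos_of_pos (by positivity)).ne']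
  interval_cases j
  · have := log_two_gt_d9
    norm_num; linarith
  · have : 1 ≤ log 3 := by
      rw [le_log_iff_exp_le (by norm_num)]
      linarith [exp_one_lt_d9]
    norm_num; linarith

theorem Gamma_add_two_div_div_Gamma_le_of_nine_le {m : ℕ} (hm : 9 ≤ m) :
    Gamma ((m : ℝ) + 2 + 2 / m) / Gamma ((m : ℝ) + 2) ≤
      1 + 4 * log ((m : ℝ) + 1) / (m + 1) := by
  have hm' : (9 : ℝ) ≤ m := by exact_mod_cast hm
  -- `1.71` is close to the least `B` with `11² ≤ B⁹`; the slack `4 - 2B` must absorb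
  -- the passage from `log (m + 2)` to `log (m + 1)`.
  have hsq : ((m : ℝ) + 2) ^ 2 ≤ (171 / 100) ^ m :=
    sq_add_two_le_pow (a := 9) (by norm_num) (by norm_num) hm
  have hlog_succ : log ((m : ℝ) + 2) ≤ log ((m : ℝ) + 1) + ((m : ℝ) + 1)⁻¹ := by
    rw [show (m : ℝ) + 2 = (m + 1) + 1 by ring]
    exact log_add_one_le_log_add_inv (by positivity)
  have hlog_ge : 2 ≤ log ((m : ℝ) + 1) :=
    calc (2 : ℝ) ≤ 3 * log 2 := by linarith [log_two_gt_d9]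
      _ = log 8 := by rw [← log_rpow two_pos]; norm_num
      _ ≤ log ((m : ℝ) + 1) := log_le_log (by norm_num) (by linarith)
  refine (Gamma_add_two_div_div_Gamma_le (by omega) (by linarith) (by norm_num) hsq).trans ?_
  rw [add_le_add_iff_left, div_le_div_iff₀ (by linarith) (by linarith)]
  have : ((m : ℝ) + 1)⁻¹ * ((m : ℝ) + 1) = 1 := inv_mul_cancel₀ (by positivity)
  nlinarith

/-- For all integers `n ≥ 2` and `1 ≤ j ≤ n`,
`1 ≤ Γ(j + 1 + 2/(n-1)) / Γ(j+1) ≤ 1 + 25·ln(j+1)/n`; moreover for all `n ≥ 10`,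
`Γ(n + 1 + 2/(n-1)) / Γ(n+1) ≤ 1 + 4·ln(n)/n`. -/
theorem stmt16 :
    (∀ n j : ℕ, 2 ≤ n → 1 ≤ j → j ≤ n →
      1 ≤ Real.Gamma ((j : ℝ) + 1 + 2 / ((n : ℝ) - 1)) / Real.Gamma ((j : ℝ) + 1)
      ∧ Real.Gamma ((j : ℝ) + 1 + 2 / ((n : ℝ) - 1)) / Real.Gamma ((j : ℝ) + 1)
          ≤ 1 + 25 * Real.log ((j : ℝ) + 1) / n)
    ∧ ∀ n : ℕ, 10 ≤ n →
        Real.Gamma ((n : ℝ) + 1 + 2 / ((n : ℝ) - 1)) / Real.Gamma ((n : ℝ) + 1)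
          ≤ 1 + 4 * Real.log n / n := by
  refine ⟨fun n j hn hj1 hjn => ?_, fun n hn => ?_⟩
  · obtain ⟨m, rfl⟩ : ∃ m, n = m + 1 := ⟨n - 1, by omega⟩
    have hj : (2 : ℝ) ≤ j + 1 := by norm_cast; omega
    push_cast
    rw [add_sub_cancel_right]
    refine ⟨one_le_Gamma_add_div_Gamma hj (by positivity), ?_⟩
    rcases (show m = 1 ∨ 2 ≤ m by omega) with rfl | hm
    · norm_num
      exact Gamma_add_two_div_Gamma_le_of_le_two hj1 hjn
    · exact Gamma_add_two_div_div_Gamma_le_of_two_le hm hjn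
  · obtain ⟨m, rfl⟩ : ∃ m, n = m + 1 := ⟨n - 1, by omega⟩
    push_cast
    rw [add_sub_cancel_right]
    have h := Gamma_add_two_div_div_Gamma_le_of_nine_le (m := m) (by omega)
    rwa [show (m : ℝ) + 2 = m + 1 + 1 by ring] at h
end
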